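/- arXiv:2011.02015 — 4 statements merged into one kernel-verified Lean document; each statement's English description precedes it below -/
import Mathlib

section
/- Let G be a finite simple graph and let m be a matching on its face poset F(G). Then the oriented cycles induced by m are pairwise vertex-disjoint; moreover, for each induced oriented cycle, the set of edges of G whose corresponding vertices of F(G) lie on that cycle forms a cycle in G, and the cycles of G obtained this way from the distinct induced oriented cycles are pairwise vertex-disjoint. -/
/-- The arc relation of the face poset of a finite abstract simplicial complex `X`
(given as a finite family of finite faces): an arc from `σ` down to `τ` whenever
`τ` is a codimension-one face of `σ`. -/
def FaceArc {V : Type*} (X : Finset (Finset V)) (σ τ : Finset V) : Prop :=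
  σ ∈ X ∧ τ ∈ X ∧ τ ⊂ σ ∧ τ.card + 1 = σ.card

/-- The arc relation of the face poset of a simple graph `G`, regarded as a
1-dimensional simplicial complex: an arc from each edge-face `{u, v}` down to
each of its endpoint vertex-faces. -/
def GraphArc {V : Type*} [DecidableEq V] (G : SimpleGraph V) (σ τ : Finset V) : Prop :=
  ∃ u v : V, G.Adj u v ∧ σ = {u, v} ∧ (τ = {u} ∨ τ = {v})

/-- A matching on the digraph with arc relation `A`: a finite set of arcs,
no two of which share an endpoint. -/
def IsMatching {α : Type*} (A : α → α → Prop) (m : Finset (α × α)) : Prop :=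
  (∀ p ∈ m, A p.1 p.2) ∧
    ∀ p ∈ m, ∀ q ∈ m, p ≠ q →
      p.1 ≠ q.1 ∧ p.1 ≠ q.2 ∧ p.2 ≠ q.1 ∧ p.2 ≠ q.2

/-- The arc relation of the digraph obtained from the digraph with arc relation `A`
by reversing the arcs belonging to `m`. -/
def MStep {α : Type*} (A : α → α → Prop) (m : Finset (α × α)) (a b : α) : Prop :=
  (A a b ∧ (a, b) ∉ m) ∨ (A b a ∧ (b, a) ∈ m)

/-- `IsCycleList R l` says the nonempty list `l` of pairwise distinct vertices is a
directed cycle of the digraph with arc relation `R` (consecutive steps, closing up). -/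
def IsCycleList {α : Type*} (R : α → α → Prop) : List α → Prop
  | [] => False
  | a :: l => (a :: l).Nodup ∧ List.Chain R a (l ++ [a])

/-- The set of oriented cycles induced by the matching `m` on the digraph with arc
relation `A` (as lists of vertices; rotated lists represent the same cycle). -/
def cyclesOf {α : Type*} (A : α → α → Prop) (m : Finset (α × α)) : Set (List α) :=
  {l | IsCycleList (MStep A m) l}

/-- `numCycles A m` is `J(m)`, the number of oriented cycles induced by `m`
(cycle lists counted up to rotation). -/
noncomputable def numCycles {α : Type*} (A : α → α → Prop) (m : Finset (α × α)) : ℕ :=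
  (Quotient.mk (List.IsRotated.setoid α) '' cyclesOf A m).ncard

/-!
In `F_m(G)` the only arcs leaving a vertex face `{x}` are reversed matched arcs, so there is at
most one of them; and an edge face entered along a reversed arc `{x} → {x, y}` can only be left
towards `{y}`. So every face with an in-arc has at most one out-arc, and two oriented cycles
through a common face agree up to rotation. Read from a vertex face, an oriented cycle alternates
`{x₀}, {x₀, x₁}, {x₁}, …` and thus traces a closed walk of `G` whose faces are exactly those of the
cycle; as these faces are distinct, the walk is a cycle of `G`.
-/

open List

section Cycles

variable {α : Type*} {R : α → α → Prop}

theorem isCycleList_iff {l : List α} :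
    IsCycleList R l ↔ l ≠ [] ∧ l.Nodup ∧ Cycle.Chain R (l : Cycle α) := by
  cases l with
  | nil => simp [IsCycleList]
  | cons a l =>
    exact ⟨fun ⟨hnd, hch⟩ => ⟨cons_ne_nil _ _, hnd, hch⟩, fun ⟨_, hnd, hch⟩ => ⟨hnd, hch⟩⟩

theorem IsCycleList.of_isRotated {l l' : List α} (h : IsCycleList R l) (hr : l ~r l') :
    IsCycleList R l' := by
  obtain ⟨hne, hnd, hch⟩ := isCycleList_iff.1 h
  exact isCycleList_iff.2
    ⟨fun h' => hne (isRotated_nil_iff.1 (h' ▸ hr)), hr.nodup_iff.1 hnd, Cycle.coe_eq_coe.2 hr ▸ hch⟩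

theorem exists_isRotated_cons_of_mem {a : α} {l : List α} (ha : a ∈ l) : ∃ t, l ~r a :: t := by
  obtain ⟨s, t, rfl⟩ := append_of_mem ha
  exact ⟨t ++ s, by simpa using isRotated_append (l := s) (l' := a :: t)⟩

theorem IsCycleList.exists_rel_of_mem {l : List α} {a : α} (h : IsCycleList R l) (ha : a ∈ l) :
    ∃ b ∈ l, R b a := by
  obtain ⟨t, hr⟩ := exists_isRotated_cons_of_mem ha
  obtain ⟨-, hch⟩ := h.of_isRotated hr
  exact ⟨(a :: t).getLast (cons_ne_nil _ _), hr.mem_iff.2 (getLast_mem _),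
    IsChain.rel_getLast_head_of_append (l₁ := a :: t) (l₂ := [a]) hch (cons_ne_nil _ _)
      (cons_ne_nil _ _)⟩

theorem eq_of_isChain_cons_append_singleton {a b : α} {l₁ l₂ : List α}
    (hdet : ∀ x ∈ a :: l₁, ∀ y z, R x y → R x z → y = z)
    (h₁ : IsChain R (a :: (l₁ ++ [b]))) (h₂ : IsChain R (a :: (l₂ ++ [b])))
    (hb₁ : b ∉ l₁) (hb₂ : b ∉ l₂) : l₁ = l₂ := by
  induction l₁ generalizing a l₂ with
  | nil =>
    cases l₂ with
    | nil => rfl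
    | cons c l₂ =>
      simp only [nil_append, cons_append, isChain_cons_cons] at h₁ h₂
      obtain rfl := hdet a mem_cons_self _ _ h₁.1 h₂.1
      exact absurd mem_cons_self hb₂
  | cons c l₁ ih =>
    simp only [cons_append, isChain_cons_cons] at h₁
    cases l₂ with
    | nil =>
      simp only [nil_append, isChain_cons_cons] at h₂
      obtain rfl := hdet a mem_cons_self _ _ h₁.1 h₂.1
      exact absurd mem_cons_self hb₁
    | cons c' l₂ =>
      simp only [cons_append, isChain_cons_cons] at h₂
      obtain rfl := hdet a mem_cons_self _ _ h₁.1 h₂.1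
      rw [ih (fun x hx => hdet x (mem_cons_of_mem _ hx)) h₁.2 h₂.2 (mt (mem_cons_of_mem _) hb₁)
        (mt (mem_cons_of_mem _) hb₂)]

theorem IsCycleList.isRotated_of_mem {l₁ l₂ : List α} {σ : α}
    (hdet : ∀ a, (∃ x, R x a) → ∀ b c, R a b → R a c → b = c)
    (h₁ : IsCycleList R l₁) (h₂ : IsCycleList R l₂) (hσ₁ : σ ∈ l₁) (hσ₂ : σ ∈ l₂) :
    l₁ ~r l₂ := by
  obtain ⟨t₁, hr₁⟩ := exists_isRotated_cons_of_mem hσ₁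
  obtain ⟨t₂, hr₂⟩ := exists_isRotated_cons_of_mem hσ₂
  have hc₁ := h₁.of_isRotated hr₁
  have ⟨hnd₁, hch₁⟩ := hc₁
  obtain ⟨hnd₂, hch₂⟩ := h₂.of_isRotated hr₂
  have ht : t₁ = t₂ := eq_of_isChain_cons_append_singleton
    (fun x hx => hdet x ((hc₁.exists_rel_of_mem hx).imp fun _ h => h.2))
    hch₁ hch₂ (nodup_cons.1 hnd₁).1 (nodup_cons.1 hnd₂).1
  exact hr₁.trans (ht ▸ hr₂.symm)

end Cycles

theorem Finset.pair_ne_singleton {α : Type*} [DecidableEq α] {x y z : α} (h : x ≠ y) :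
    ({x, y} : Finset α) ≠ {z} := fun hz => by
  simpa [Finset.card_pair h] using congrArg Finset.card hz

theorem Sym2.toFinset_injective {α : Type*} [DecidableEq α] :
    Function.Injective (Sym2.toFinset : Sym2 α → Finset α) := fun _ _ h =>
  Sym2.ext fun x => by rw [← Sym2.mem_toFinset, h, Sym2.mem_toFinset]

namespace SimpleGraph.Walk

variable {V : Type*} [DecidableEq V] {G : SimpleGraph V}

def faces : {u z : V} → G.Walk u z → List (Finset V)
  | _, _, nil => []
  | u, _, cons (v := v) _ p => {u, v} :: {v} :: p.faces

theorem faces_perm {u z : V} (w : G.Walk u z) :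
    w.faces.Perm (w.edges.map Sym2.toFinset ++ w.support.tail.map ({·})) := by
  induction w with
  | nil => simp [faces]
  | cons h p ih =>
    rw [faces, edges_cons, support_cons, List.tail_cons, ← p.cons_tail_support]
    simp only [List.map_cons, List.cons_append, Sym2.toFinset_mk_eq]
    exact ((ih.cons _).trans List.perm_middle.symm).cons _

theorem isCycle_of_nodup_faces {x : V} {w : G.Walk x x} (hw : w ≠ nil) (h : w.faces.Nodup) :
    w.IsCycle := by
  rw [(faces_perm w).nodup_iff, List.nodup_append] at h
  exact (isCycle_def w).2 ⟨⟨h.1.of_map _⟩, hw, h.2.1.of_map _⟩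

theorem pair_mem_faces_iff {u z a b : V} (w : G.Walk u z) (hab : a ≠ b) :
    {a, b} ∈ w.faces ↔ s(a, b) ∈ w.edges := by
  rw [(faces_perm w).mem_iff, List.mem_append, ← Sym2.toFinset_mk_eq,
    List.mem_map_of_injective Sym2.toFinset_injective, Sym2.toFinset_mk_eq, or_iff_left]
  simp only [List.mem_map, not_exists, not_and]
  exact fun v _ hv => Finset.pair_ne_singleton hab hv.symm

end SimpleGraph.Walk

section FacePoset

open SimpleGraph.Walk

variable {V : Type*} [DecidableEq V] {G : SimpleGraph V} {m : Finset (Finset V × Finset V)}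

theorem graphArc_iff {σ τ : Finset V} :
    GraphArc G σ τ ↔ ∃ x y, G.Adj x y ∧ σ = {x, y} ∧ τ = {x} := by
  constructor
  · rintro ⟨u, v, huv, rfl, rfl | rfl⟩
    · exact ⟨u, v, huv, rfl, rfl⟩
    · exact ⟨v, u, huv.symm, Finset.pair_comm _ _, rfl⟩
  · rintro ⟨x, y, hxy, rfl, rfl⟩
    exact ⟨x, y, hxy, rfl, .inl rfl⟩

theorem mStep_singleton {x : V} {b : Finset V} (h : MStep (GraphArc G) m {x} b) :
    ∃ y, G.Adj x y ∧ b = {x, y} ∧ (({x, y} : Finset V), ({x} : Finset V)) ∈ m := by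
  rcases h with ⟨hxb, -⟩ | ⟨hbx, hm⟩
  · obtain ⟨u, v, huv, hx, -⟩ := graphArc_iff.1 hxb
    exact absurd hx.symm (Finset.pair_ne_singleton huv.ne)
  · obtain ⟨u, y, huy, rfl, hx⟩ := graphArc_iff.1 hbx
    obtain rfl := Finset.singleton_injective hx.symm
    exact ⟨y, huy, rfl, hm⟩

theorem mStep_pair {x y : V} (hxy : x ≠ y) (hm : (({x, y} : Finset V), ({x} : Finset V)) ∈ m)
    {c : Finset V} (h : MStep (GraphArc G) m {x, y} c) : c = {y} := by
  rcases h with ⟨hxc, hc⟩ | ⟨hcx, -⟩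
  · obtain ⟨u, v, -, hxy', rfl⟩ := graphArc_iff.1 hxc
    have hu : u ∈ ({x, y} : Finset V) := hxy' ▸ Finset.mem_insert_self _ _
    rcases Finset.mem_insert.1 hu with rfl | hu
    · exact absurd hm hc
    · rw [Finset.mem_singleton.1 hu]
  · obtain ⟨u, v, -, -, hx⟩ := graphArc_iff.1 hcx
    exact absurd hx (Finset.pair_ne_singleton hxy)

theorem mStep_functional (hm : IsMatching (GraphArc G) m) {σ : Finset V}
    (hin : ∃ a, MStep (GraphArc G) m a σ) {b c : Finset V}
    (hb : MStep (GraphArc G) m σ b) (hc : MStep (GraphArc G) m σ c) : b = c := by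
  obtain ⟨a, ⟨haσ, -⟩ | ⟨hσa, hσa_mem⟩⟩ := hin
  · obtain ⟨u, x, -, -, rfl⟩ := graphArc_iff.1 haσ
    obtain ⟨y, -, rfl, hy⟩ := mStep_singleton hb
    obtain ⟨z, -, rfl, hz⟩ := mStep_singleton hc
    by_contra hyz
    exact (hm.2 _ hy _ hz fun h => hyz (congrArg Prod.fst h)).2.2.2 rfl
  · obtain ⟨x, y, hxy, rfl, rfl⟩ := graphArc_iff.1 hσa
    rw [mStep_pair hxy.ne hσa_mem hb, mStep_pair hxy.ne hσa_mem hc]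

theorem exists_singleton_mem_of_mem_cyclesOf {γ : List (Finset V)}
    (hγ : γ ∈ cyclesOf (GraphArc G) m) : ∃ x, {x} ∈ γ := by
  obtain ⟨σ, hσ⟩ := List.exists_mem_of_ne_nil γ (isCycleList_iff.1 hγ).1
  obtain ⟨τ, hτ, ⟨hτσ, -⟩ | ⟨hστ, -⟩⟩ := IsCycleList.exists_rel_of_mem hγ hσ
  · obtain ⟨x, -, -, -, rfl⟩ := graphArc_iff.1 hτσ
    exact ⟨x, hσ⟩
  · obtain ⟨x, -, -, -, rfl⟩ := graphArc_iff.1 hστ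
    exact ⟨x, hτ⟩

theorem exists_walk_faces_eq_of_isChain :
    ∀ {x z : V} {l : List (Finset V)}, List.IsChain (MStep (GraphArc G) m) ({x} :: (l ++ [{z}])) →
      ∃ w : G.Walk x z, w.faces = l ++ [{z}]
  | x, z, [], h => by
    obtain ⟨y, hxy, hz, -⟩ := mStep_singleton (List.isChain_pair.1 h)
    exact absurd hz.symm (Finset.pair_ne_singleton hxy.ne)
  | x, z, [d], h => by
    simp only [List.cons_append, List.nil_append, List.isChain_cons_cons] at h
    obtain ⟨y, hxy, rfl, hm⟩ := mStep_singleton h.1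
    obtain rfl := Finset.singleton_injective (mStep_pair hxy.ne hm h.2.1)
    exact ⟨cons hxy nil, rfl⟩
  | x, z, d :: s :: l, h => by
    simp only [List.cons_append, List.isChain_cons_cons] at h
    obtain ⟨y, hxy, rfl, hm⟩ := mStep_singleton h.1
    obtain rfl := mStep_pair hxy.ne hm h.2.1
    obtain ⟨w, hw⟩ := exists_walk_faces_eq_of_isChain h.2.2
    exact ⟨cons hxy w, by rw [faces, hw]; rfl⟩

theorem exists_isCycle_isRotated_faces {γ : List (Finset V)}
    (hγ : γ ∈ cyclesOf (GraphArc G) m) :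
    ∃ (x : V) (w : G.Walk x x), w.IsCycle ∧ γ ~r w.faces := by
  obtain ⟨x, hx⟩ := exists_singleton_mem_of_mem_cyclesOf hγ
  obtain ⟨t, hr⟩ := exists_isRotated_cons_of_mem hx
  obtain ⟨-, hch⟩ := hγ.of_isRotated hr
  obtain ⟨w, hw⟩ := exists_walk_faces_eq_of_isChain hch
  have hγw : γ ~r w.faces := hw ▸ hr.trans (isRotated_concat _ _).symm
  refine ⟨x, w, isCycle_of_nodup_faces ?_ (hγw.nodup_iff.1 (isCycleList_iff.1 hγ).2.1), hγw⟩
  rintro rfl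
  simp [faces] at hw

end FacePoset

theorem graph_cycles_vertex_disjoint_general {V : Type*} [DecidableEq V]
    (G : SimpleGraph V)
    (m : Finset (Finset V × Finset V)) (hm : IsMatching (GraphArc G) m) :
    (∀ γ₁ ∈ cyclesOf (GraphArc G) m, ∀ γ₂ ∈ cyclesOf (GraphArc G) m,
        ¬ γ₁.IsRotated γ₂ → ∀ σ ∈ γ₁, σ ∉ γ₂) ∧
    (∀ γ ∈ cyclesOf (GraphArc G) m, ∃ (v : V) (w : G.Walk v v), w.IsCycle ∧
        ∀ x y : V, x ≠ y → (s(x, y) ∈ w.edges ↔ ({x, y} : Finset V) ∈ γ)) ∧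
    (∀ γ₁ ∈ cyclesOf (GraphArc G) m, ∀ γ₂ ∈ cyclesOf (GraphArc G) m,
        ¬ γ₁.IsRotated γ₂ →
        ∀ x : V, ({x} : Finset V) ∈ γ₁ → ({x} : Finset V) ∉ γ₂) := by
  have disjoint : ∀ γ₁ ∈ cyclesOf (GraphArc G) m, ∀ γ₂ ∈ cyclesOf (GraphArc G) m,
      ¬ γ₁.IsRotated γ₂ → ∀ σ ∈ γ₁, σ ∉ γ₂ := fun γ₁ h₁ γ₂ h₂ hrot σ hσ₁ hσ₂ =>
    hrot (IsCycleList.isRotated_of_mem (fun _ hin _ _ => mStep_functional hm hin) h₁ h₂ hσ₁ hσ₂)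
  refine ⟨disjoint, fun γ hγ => ?_, fun γ₁ h₁ γ₂ h₂ hrot x => disjoint γ₁ h₁ γ₂ h₂ hrot {x}⟩
  obtain ⟨x, w, hw, hγw⟩ := exists_isCycle_isRotated_faces hγ
  exact ⟨x, w, hw, fun a b hab => by rw [← w.pair_mem_faces_iff hab, hγw.mem_iff]⟩

/-- for a simple graph `G`, the oriented cycles induced by a matching on
the face poset `F(G)` are pairwise vertex-disjoint; each induced oriented cycle yields
a cycle of `G` (the edges of `G` whose faces lie on it), and these cycles of `G` are
pairwise vertex-disjoint. -/
theorem graph_cycles_vertex_disjoint {V : Type*} [Fintype V] [DecidableEq V]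
    (G : SimpleGraph V)
    (m : Finset (Finset V × Finset V)) (hm : IsMatching (GraphArc G) m) :
    (∀ γ₁ ∈ cyclesOf (GraphArc G) m, ∀ γ₂ ∈ cyclesOf (GraphArc G) m,
        ¬ γ₁.IsRotated γ₂ → ∀ σ ∈ γ₁, σ ∉ γ₂) ∧
    (∀ γ ∈ cyclesOf (GraphArc G) m, ∃ (v : V) (w : G.Walk v v), w.IsCycle ∧
        ∀ x y : V, x ≠ y → (s(x, y) ∈ w.edges ↔ ({x, y} : Finset V) ∈ γ)) ∧
    (∀ γ₁ ∈ cyclesOf (GraphArc G) m, ∀ γ₂ ∈ cyclesOf (GraphArc G) m,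
        ¬ γ₁.IsRotated γ₂ →
        ∀ x : V, ({x} : Finset V) ∈ γ₁ → ({x} : Finset V) ∉ γ₂) :=
  graph_cycles_vertex_disjoint_general G m hm
end

section
/- Let X be a finite abstract simplicial complex, and let Ĉ(X) be the 𝔽₂-vector space with basis the nonempty matchings on F(X). Define the linear map ∂_J on Ĉ(X) by ∂_J(m) = Σ (m \ {e}), the sum ranging over those e ∈ m with |m| ≥ 2 and J(m \ {e}) = J(m), and ∂_J(m) = 0 if |m| = 1. Then ∂_J ∘ ∂_J = 0; that is, ∂_J is a differential on Ĉ(X). -/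
open scoped Classical in
/-- The `J`-preserving part `∂_J` of the simplicial differential on the 𝔽₂-vector
space with basis the finite subsets of arcs (extended linearly from its values on
basis elements): `∂_J m = Σ (m \ {e})`, the sum over those `e ∈ m` with `|m| ≥ 2` and
`J(m \ {e}) = J(m)`; in particular `∂_J m = 0` when `|m| = 1`. -/
noncomputable def bdryJ {α : Type*} [DecidableEq α] (A : α → α → Prop) :
    (Finset (α × α) →₀ ZMod 2) → (Finset (α × α) →₀ ZMod 2) :=
  fun x => x.sum fun m c =>
    c • (m.filter (fun e => 2 ≤ m.card ∧ numCycles A (m.erase e) = numCycles A m)).sum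
      (fun e => Finsupp.single (m.erase e) (1 : ZMod 2))

/-!
`∂_J ∂_J m` is the sum of `m \ {e, f}` over the ordered pairs `(e, f)` such that removing `e`
and then `f` keeps `J` unchanged. Removing an arc never creates an oriented cycle: along a cycle
of `F_{m \ e}` the dimension rises exactly at the reversed arcs, never twice in a row, and returns
to its starting value, so rises and falls alternate. Running down the arc `e` would thus require
the top face of `e` to be entered by climbing another arc of `m \ e`, impossible in a matching.
Hence `J(m \ e \ f) ≤ J(m \ e) ≤ J(m)`, the condition on `(e, f)` is equivalent to the symmetric
`J(m \ {e, f}) = J(m)`, and the terms cancel in pairs over `𝔽₂`.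
-/

open Finset

-- Rises are never adjacent and, the height being periodic, as many as falls: `s` maps the
-- rises onto the falls.
theorem up_symm_apply_of_not_up {ι : Type*} [Fintype ι] (s : Equiv.Perm ι) (h : ι → ℤ)
    (up : ι → Prop) [DecidablePred up] (hh : ∀ i, h (s i) = h i + if up i then 1 else -1)
    (hup : ∀ i, up i → ¬up (s i)) {j : ι} (hj : ¬up j) : up (s.symm j) := by
  have hsum : ∑ i, (if up i then (1 : ℤ) else -1) = 0 := by
    have := Equiv.sum_comp s h
    simp only [hh, sum_add_distrib] at this
    linarith
  have hcard : #{i | up i} = #{i | ¬up i} := by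
    rw [sum_ite, sum_const, sum_const] at hsum
    simp only [nsmul_eq_mul, mul_one, mul_neg] at hsum
    omega
  have himage : ({i | up i} : Finset ι).map s.toEmbedding = ({i | ¬up i} : Finset ι) := by
    refine eq_of_subset_of_card_le ?_ (by rw [card_map, hcard])
    intro i hi
    obtain ⟨i', hi', rfl⟩ := mem_map.1 hi
    simpa using hup i' (by simpa using hi')
  have hj' : j ∈ ({i | up i} : Finset ι).map s.toEmbedding := by simpa [himage] using hj
  obtain ⟨i, hi, rfl⟩ := mem_map.1 hj'
  simpa using hi

theorem isCycleList_cons_iff {α : Type*} {R : α → α → Prop} {a : α} {t : List α} :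
    IsCycleList R (a :: t) ↔ (a :: t).Nodup ∧
      ∀ i : Fin (t.length + 1),
        R ((a :: t).get i) ((a :: t).get (finRotate (t.length + 1) i)) := by
  refine and_congr_right fun _ => ?_
  show List.IsChain R ((a :: t) ++ [a]) ↔ _
  have hlen : ((a :: t) ++ [a]).length = t.length + 2 := by simp
  have hcur : ∀ i : Fin (t.length + 1),
      ((a :: t) ++ [a])[(i : ℕ)]'(by omega) = (a :: t).get i :=
    fun _ => List.getElem_append_left _
  have hnext : ∀ i : Fin (t.length + 1),
      ((a :: t) ++ [a])[(i : ℕ) + 1]'(by omega) = (a :: t).get (finRotate (t.length + 1) i) := by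
    intro i
    by_cases hl : i = Fin.last _
    · subst hl
      simp
    · have hsucc : ((finRotate _ i) : ℕ) = i + 1 := by rw [coe_finRotate, if_neg hl]
      simp only [List.get_eq_getElem, hsucc]
      exact List.getElem_append_left _
  rw [List.isChain_iff_getElem]
  constructor
  · intro h i
    simpa only [hcur, hnext] using h i (by omega)
  · intro h i hi
    have hi' := h ⟨i, by omega⟩
    rwa [← hcur, ← hnext] at hi'

theorem cyclesOf_finite {α : Type*} [Fintype α] (A : α → α → Prop) (m : Finset (α × α)) :
    (cyclesOf A m).Finite := by
  refine (List.finite_length_le α (Fintype.card α)).subset ?_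
  rintro (_ | ⟨a, t⟩) hl
  · exact hl.elim
  · exact hl.1.length_le_card

section Matching

variable {α : Type*} {A : α → α → Prop}

theorem IsMatching.mono {m m' : Finset (α × α)} (hm : IsMatching A m) (h : m' ⊆ m) :
    IsMatching A m' :=
  ⟨fun p hp => hm.1 p (h hp), fun p hp q hq hne => hm.2 p (h hp) q (h hq) hne⟩

theorem MStep.of_erase [DecidableEq α] {m : Finset (α × α)} {e : α × α} {a b : α}
    (h : MStep A (m.erase e) a b) (hne : (a, b) ≠ e) : MStep A m a b := by
  rcases h with ⟨hab, hnot⟩ | ⟨hba, hmem⟩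
  · exact .inl ⟨hab, fun hm => hnot (mem_erase.2 ⟨hne, hm⟩)⟩
  · exact .inr ⟨hba, mem_of_mem_erase hmem⟩

end Matching

section FacePoset

variable {V : Type*} {X : Finset (Finset V)} {m : Finset (Finset V × Finset V)}

theorem IsMatching.notMem_of_fst_mem (hm : IsMatching (FaceArc X) m) {a b c : Finset V}
    (hba : (b, a) ∈ m) : (c, b) ∉ m := by
  intro hcb
  by_cases heq : (b, a) = (c, b)
  · obtain ⟨rfl, rfl⟩ := Prod.mk.inj heq
    exact (hm.1 _ hba).2.2.1.ne rfl
  · exact (hm.2 _ hba _ hcb heq).2.1 rfl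

variable [DecidableEq V]

theorem MStep.card_eq (hm : ∀ p ∈ m, FaceArc X p.1 p.2) {a b : Finset V}
    (h : MStep (FaceArc X) m a b) : (#b : ℤ) = #a + if (b, a) ∈ m then 1 else -1 := by
  rcases h with ⟨hab, -⟩ | ⟨-, hmem⟩
  · have hba : (b, a) ∉ m := fun hba => (hm _ hba).2.2.1.asymm hab.2.2.1
    have := hab.2.2.2
    rw [if_neg hba]
    omega
  · have : #a + 1 = #b := (hm _ hmem).2.2.2
    rw [if_pos hmem]
    omega

theorem IsMatching.step_ne_of_cycle {ι : Type*} [Fintype ι] (hm : IsMatching (FaceArc X) m)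
    {e : Finset V × Finset V} (he : e ∈ m) (s : Equiv.Perm ι) (v : ι → Finset V)
    (hv : ∀ i, MStep (FaceArc X) (m.erase e) (v i) (v (s i))) (i : ι) :
    (v i, v (s i)) ≠ e := by
  have hm' : IsMatching (FaceArc X) (m.erase e) := hm.mono (erase_subset e m)
  intro hie
  subst hie
  have hdown : (v (s i), v i) ∉ m.erase (v i, v (s i)) := fun hup =>
    (hm'.1 _ hup).2.2.1.asymm (hm.1 _ he).2.2.1
  have hclimb := up_symm_apply_of_not_up s (fun j => #(v j))
    (fun j => (v (s j), v j) ∈ m.erase (v i, v (s i)))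
    (fun j => (hv j).card_eq hm'.1) (fun _ hj => hm'.notMem_of_fst_mem hj) hdown
  simp only [Equiv.apply_symm_apply] at hclimb
  obtain ⟨hne, hmem⟩ := mem_erase.1 hclimb
  exact (hm.2 _ hmem _ he hne).1 rfl

theorem IsMatching.cyclesOf_erase_subset (hm : IsMatching (FaceArc X) m)
    {e : Finset V × Finset V} (he : e ∈ m) :
    cyclesOf (FaceArc X) (m.erase e) ⊆ cyclesOf (FaceArc X) m := by
  rintro (_ | ⟨a, t⟩) hl
  · exact hl.elim
  rw [cyclesOf, Set.mem_ofPred_eq, isCycleList_cons_iff] at hl ⊢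
  obtain ⟨hnodup, hsteps⟩ := hl
  exact ⟨hnodup, fun i => (hsteps i).of_erase (hm.step_ne_of_cycle he _ _ hsteps i)⟩

theorem IsMatching.numCycles_erase_le [Fintype V] (hm : IsMatching (FaceArc X) m)
    {e : Finset V × Finset V} (he : e ∈ m) :
    numCycles (FaceArc X) (m.erase e) ≤ numCycles (FaceArc X) m :=
  Set.ncard_le_ncard (Set.image_mono (hm.cyclesOf_erase_subset he))
    ((cyclesOf_finite _ _).image _)

end FacePoset

section Differential

variable {α : Type*} [DecidableEq α] {A : α → α → Prop} {m : Finset (α × α)}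

open scoped Classical in
noncomputable def bdryJArcs (A : α → α → Prop) (m : Finset (α × α)) : Finset (α × α) :=
  m.filter fun e => 2 ≤ #m ∧ numCycles A (m.erase e) = numCycles A m

noncomputable def bdryJSingle (A : α → α → Prop) (m : Finset (α × α)) :
    Finset (α × α) →₀ ZMod 2 :=
  ∑ e ∈ bdryJArcs A m, Finsupp.single (m.erase e) 1

theorem mem_bdryJArcs {e : α × α} :
    e ∈ bdryJArcs A m ↔ e ∈ m ∧ 2 ≤ #m ∧ numCycles A (m.erase e) = numCycles A m := by
  rw [bdryJArcs, mem_filter]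

theorem bdryJ_eq_linearCombination :
    bdryJ A = Finsupp.linearCombination (ZMod 2) (bdryJSingle A) :=
  funext fun x => (Finsupp.linearCombination_apply _ x).symm

theorem mem_bdryJArcs_erase_comm
    (hmono : ∀ m' ⊆ m, ∀ e ∈ m', numCycles A (m'.erase e) ≤ numCycles A m')
    {e f : α × α} (he : e ∈ bdryJArcs A m) (hf : f ∈ bdryJArcs A (m.erase e)) :
    f ∈ bdryJArcs A m ∧ e ∈ bdryJArcs A (m.erase f) := by
  obtain ⟨hem, hcard, hJe⟩ := mem_bdryJArcs.1 he
  obtain ⟨hfme, hcard', hJf⟩ := mem_bdryJArcs.1 hf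
  have hfm : f ∈ m := mem_of_mem_erase hfme
  have hefm : e ∈ m.erase f := mem_erase.2 ⟨(ne_of_mem_erase hfme).symm, hem⟩
  have hJ : numCycles A ((m.erase f).erase e) = numCycles A m := by
    rw [erase_right_comm, hJf, hJe]
  have hle₁ := hmono (m.erase f) (erase_subset f m) e hefm
  have hle₂ := hmono m subset_rfl f hfm
  have hcard_eq : #(m.erase f) = #(m.erase e) := by
    rw [card_erase_of_mem hfm, card_erase_of_mem hem]
  exact ⟨mem_bdryJArcs.2 ⟨hfm, hcard, by omega⟩,
    mem_bdryJArcs.2 ⟨hefm, hcard_eq ▸ hcard', by omega⟩⟩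

theorem bdryJ_bdryJSingle
    (hmono : ∀ m' ⊆ m, ∀ e ∈ m', numCycles A (m'.erase e) ≤ numCycles A m') :
    bdryJ A (bdryJSingle A m) = 0 := by
  rw [bdryJ_eq_linearCombination, bdryJSingle, map_sum]
  simp only [Finsupp.linearCombination_single, one_smul, bdryJSingle]
  rw [sum_sigma']
  refine sum_involution (fun p _ => ⟨p.2, p.1⟩) ?_ ?_ ?_ fun _ _ => rfl
  · rintro ⟨e, f⟩ -
    rw [erase_right_comm, ← Finsupp.single_add, CharTwo.add_self_eq_zero, Finsupp.single_zero]
  · rintro ⟨e, f⟩ hp - h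
    exact ne_of_mem_erase (mem_bdryJArcs.1 (mem_sigma.1 hp).2).1 (congrArg Sigma.fst h)
  · rintro ⟨e, f⟩ hp
    rw [mem_sigma] at hp ⊢
    exact mem_bdryJArcs_erase_comm hmono hp.1 hp.2

end Differential

theorem bdryJ_squared_zero_general {V : Type*} [Fintype V] [DecidableEq V]
    (X : Finset (Finset V))
    (x : Finset (Finset V × Finset V) →₀ ZMod 2)
    (hx : ∀ m ∈ x.support, IsMatching (FaceArc X) m ∧ m ≠ ∅) :
    bdryJ (FaceArc X) (bdryJ (FaceArc X) x) = 0 := by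
  have hmono : ∀ m ∈ x.support, ∀ m' ⊆ m, ∀ e ∈ m',
      numCycles (FaceArc X) (m'.erase e) ≤ numCycles (FaceArc X) m' :=
    fun m hm m' hm' _ he => ((hx m hm).1.mono hm').numCycles_erase_le he
  rw [bdryJ_eq_linearCombination, Finsupp.linearCombination_apply _ x, map_finsuppSum]
  refine sum_eq_zero fun m hm => ?_
  dsimp only
  rw [map_smul, ← bdryJ_eq_linearCombination, bdryJ_bdryJSingle (hmono m hm), smul_zero]

/-- `∂_J ∘ ∂_J = 0` on the 𝔽₂-vector space `Ĉ(X)` with basis the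
nonempty matchings on the face poset of a finite simplicial complex `X`; that is,
`∂_J` is a differential on `Ĉ(X)`. -/
theorem bdryJ_squared_zero {V : Type*} [Fintype V] [DecidableEq V]
    (X : Finset (Finset V)) (hXne : X.Nonempty)
    (hX0 : ∀ s ∈ X, s ≠ ∅)
    (hXdown : ∀ s ∈ X, ∀ t ⊆ s, t ≠ ∅ → t ∈ X)
    (x : Finset (Finset V × Finset V) →₀ ZMod 2)
    (hx : ∀ m ∈ x.support, IsMatching (FaceArc X) m ∧ m ≠ ∅) :
    bdryJ (FaceArc X) (bdryJ (FaceArc X) x) = 0 :=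
  bdryJ_squared_zero_general X x hx
end

section
/- Let G be a finite simple graph, and let Ĉ(G) be the 𝔽₂-vector space with basis the nonempty matchings on F(G). Define the linear map ∂_d on Ĉ(G) by ∂_d(m) = Σ (m \ {e}), the sum ranging over those e ∈ m with |m| ≥ 2 and J(m \ {e}) = J(m) − 1, and ∂_d(m) = 0 if |m| = 1. Then ∂_d ∘ ∂_d = 0; that is, the diagonal map ∂_d is a differential on Ĉ(G). -/
open scoped Classical in
/-- The diagonal part `∂_d` of the simplicial differential on the 𝔽₂-vector space
with basis the finite subsets of arcs (extended linearly from its values on basis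
elements): `∂_d m = Σ (m \ {e})`, the sum over those `e ∈ m` with `|m| ≥ 2` and
`J(m \ {e}) = J(m) − 1`; in particular `∂_d m = 0` when `|m| = 1`. -/
noncomputable def bdryD {α : Type*} [DecidableEq α] (A : α → α → Prop) :
    (Finset (α × α) →₀ ZMod 2) → (Finset (α × α) →₀ ZMod 2) :=
  fun x => x.sum fun m c =>
    c • (m.filter (fun e => 2 ≤ m.card ∧ numCycles A (m.erase e) + 1 = numCycles A m)).sum
      (fun e => Finsupp.single (m.erase e) (1 : ZMod 2))

/-! In the face poset of a graph every oriented cycle induced by a matching `m` alternates between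
reversed arcs of `m` and forward arcs, and along such a cycle each face has only one possible
successor. Hence two cycles through a common face coincide, and erasing an arc `e ∈ m` destroys
exactly the cycle through the edge-face of `e`, if there is one. So the terms `m \ {e, f}` of
`∂_d ∂_d m` are indexed by ordered pairs `(e, f)` lying on two distinct cycles of `m`, a condition
symmetric in `e` and `f`, and they cancel in pairs over `𝔽₂`. -/

theorem Finset.sum_eq_zero_of_swap_mem {ι M : Type*} [AddCommMonoid M] [Module (ZMod 2) M]
    (s : Finset (ι × ι)) (hs : ∀ p ∈ s, p.swap ∈ s) (hdiag : ∀ p ∈ s, p.1 ≠ p.2)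
    (f : ι × ι → M) (hf : ∀ p, f p.swap = f p) : ∑ p ∈ s, f p = 0 := by
  refine Finset.sum_involution (fun p _ => p.swap) (fun p _ => ?_)
    (fun p hp _ h => hdiag p hp (congrArg Prod.fst h).symm) hs (fun p _ => p.swap_swap)
  rw [hf, ← two_smul (ZMod 2), show (2 : ZMod 2) = 0 from rfl, zero_smul]

theorem List.exists_isRotated_cons {α : Type*} {l : List α} {x : α} (hx : x ∈ l) :
    ∃ t, l ~r x :: t := by
  obtain ⟨s, t, rfl⟩ := List.append_of_mem hx
  exact ⟨t ++ s, by simpa using List.isRotated_append (l := s) (l' := x :: t)⟩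

theorem List.eq_of_isChain_of_rightUnique {α : Type*} {R : α → α → Prop} {z : α} :
    ∀ {x : α} {t₁ t₂ : List α}, (∀ a ∈ x :: t₁, ∀ b c, R a b → R a c → b = c) →
      z ∉ t₁ → z ∉ t₂ → IsChain R (x :: (t₁ ++ [z])) → IsChain R (x :: (t₂ ++ [z])) →
        t₁ = t₂
  | _, [], [], _, _, _, _, _ => rfl
  | x, [], c :: _, hR, _, hz₂, h₁, h₂ => by
    obtain rfl : z = c := hR x mem_cons_self z c (isChain_pair.1 h₁) h₂.rel
    exact absurd mem_cons_self hz₂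
  | x, b :: _, [], hR, hz₁, _, h₁, h₂ => by
    obtain rfl : b = z := hR x mem_cons_self b z h₁.rel (isChain_pair.1 h₂)
    exact absurd mem_cons_self hz₁
  | x, b :: t₁, c :: t₂, hR, hz₁, hz₂, h₁, h₂ => by
    obtain rfl : b = c := hR x mem_cons_self b c h₁.rel h₂.rel
    rw [eq_of_isChain_of_rightUnique (fun a ha => hR a (mem_cons_of_mem x ha))
      (fun h => hz₁ (mem_cons_of_mem b h)) (fun h => hz₂ (mem_cons_of_mem b h))
      h₁.tail h₂.tail]

namespace IsCycleList

variable {α : Type*} {R S : α → α → Prop} {l l₁ l₂ : List α}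

theorem iff_cycleChain :
    IsCycleList R l ↔ l ≠ [] ∧ l.Nodup ∧ Cycle.Chain R (l : Cycle α) := by
  cases l with
  | nil => simp [IsCycleList]
  | cons a t =>
    simp only [IsCycleList, Cycle.chain_coe_cons]
    exact ⟨fun h => ⟨List.cons_ne_nil a t, h⟩, And.right⟩

theorem of_isRotated_s13 (h : IsCycleList R l₁) (hr : l₁ ~r l₂) : IsCycleList R l₂ := by
  obtain ⟨hne, hnd, hch⟩ := iff_cycleChain.1 h
  exact iff_cycleChain.2 ⟨fun h => hne (List.isRotated_nil_iff.1 (h ▸ hr)), hr.nodup_iff.1 hnd,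
    Cycle.coe_eq_coe.2 hr ▸ hch⟩

theorem exists_rel_of_mem_s13 (h : IsCycleList R l) {x : α} (hx : x ∈ l) : ∃ y ∈ l, R y x := by
  obtain ⟨t, hr⟩ := List.exists_isRotated_cons hx
  obtain ⟨-, -, hch⟩ := iff_cycleChain.1 (h.of_isRotated_s13 hr)
  have := (Cycle.chain_ne_nil R (List.cons_ne_nil x t)).1 hch
  exact ⟨_, hr.mem_iff.2 (List.getLast_mem _), this.rel⟩

theorem mono (h : IsCycleList R l) (hRS : ∀ a ∈ l, ∀ b ∈ l, R a b → S a b) :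
    IsCycleList S l := by
  cases l with
  | nil => exact h.elim
  | cons a t =>
    have hmem : ∀ b ∈ a :: (t ++ [a]), b ∈ a :: t := by
      simp only [List.mem_cons, List.mem_append]
      tauto
    exact ⟨h.1, h.2.imp_of_mem_imp fun b c hb hc => hRS b (hmem b hb) c (hmem c hc)⟩

theorem isRotated_of_mem_s13 (h₁ : IsCycleList R l₁) (h₂ : IsCycleList R l₂) {x : α}
    (hx₁ : x ∈ l₁) (hx₂ : x ∈ l₂) (hR : ∀ a ∈ l₁, ∀ b c, R a b → R a c → b = c) : l₁ ~r l₂ := by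
  obtain ⟨t₁, hr₁⟩ := List.exists_isRotated_cons hx₁
  obtain ⟨t₂, hr₂⟩ := List.exists_isRotated_cons hx₂
  obtain ⟨hnd₁, hch₁⟩ := h₁.of_isRotated_s13 hr₁
  obtain ⟨hnd₂, hch₂⟩ := h₂.of_isRotated_s13 hr₂
  have ht : t₁ = t₂ := List.eq_of_isChain_of_rightUnique
    (fun a ha => hR a (hr₁.mem_iff.2 ha)) (List.nodup_cons.1 hnd₁).1 (List.nodup_cons.1 hnd₂).1
    hch₁ hch₂
  exact hr₁.trans (ht ▸ hr₂.symm)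

theorem setOf_finite [Fintype α] : {l | IsCycleList R l}.Finite :=
  (List.finite_length_le α (Fintype.card α)).subset fun l hl => by
    cases l with
    | nil => exact hl.elim
    | cons a t => exact hl.1.length_le_card

end IsCycleList

section Differential

variable {α : Type*} [DecidableEq α] (A : α → α → Prop)

def DropsCycle (m : Finset (α × α)) (e : α × α) : Prop :=
  2 ≤ m.card ∧ numCycles A (m.erase e) + 1 = numCycles A m

open scoped Classical in
theorem bdryD_eq_linearCombination :
    bdryD A = Finsupp.linearCombination (ZMod 2)
      fun m => ∑ e ∈ m with DropsCycle A m e, Finsupp.single (m.erase e) 1 := by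
  funext x
  rw [Finsupp.linearCombination_apply]
  unfold bdryD DropsCycle
  congr!

open scoped Classical in
theorem bdryD_single (m : Finset (α × α)) :
    bdryD A (Finsupp.single m 1) =
      ∑ e ∈ m with DropsCycle A m e, Finsupp.single (m.erase e) 1 := by
  rw [bdryD_eq_linearCombination, Finsupp.linearCombination_single, one_smul]

theorem bdryD_bdryD_single {m : Finset (α × α)}
    (hsymm : ∀ e ∈ m, ∀ f ∈ m, e ≠ f → DropsCycle A m e → DropsCycle A (m.erase e) f →
      DropsCycle A m f ∧ DropsCycle A (m.erase f) e) :
    bdryD A (bdryD A (Finsupp.single m 1)) = 0 := by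
  classical
  let pairs := (m ×ˢ m).filter fun p =>
    DropsCycle A m p.1 ∧ p.2 ≠ p.1 ∧ DropsCycle A (m.erase p.1) p.2
  have hpairs : ∀ p, p ∈ pairs ↔ p.1 ∈ m.filter (DropsCycle A m) ∧
      p.2 ∈ (m.erase p.1).filter (DropsCycle A (m.erase p.1)) := by
    intro p
    simp only [pairs, Finset.mem_filter, Finset.mem_product, Finset.mem_erase]
    tauto
  rw [bdryD_single, bdryD_eq_linearCombination, map_sum]
  simp_rw [← bdryD_eq_linearCombination, bdryD_single]
  rw [← Finset.sum_finset_product' pairs _ _ hpairs]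
  refine Finset.sum_eq_zero_of_swap_mem pairs (fun p hp => ?_) (fun p hp => ?_) _
    (fun p => by rw [Prod.fst_swap, Prod.snd_swap, Finset.erase_right_comm])
  · obtain ⟨he, hf⟩ := Finset.mem_product.1 (Finset.mem_filter.1 hp).1
    obtain ⟨h₁, hfe, h₂⟩ := (Finset.mem_filter.1 hp).2
    obtain ⟨h₁', h₂'⟩ := hsymm _ he _ hf (Ne.symm hfe) h₁ h₂
    exact Finset.mem_filter.2 ⟨Finset.mem_product.2 ⟨hf, he⟩, h₁', Ne.symm hfe, h₂'⟩
  · exact fun h => (Finset.mem_filter.1 hp).2.2.1 h.symm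

theorem bdryD_bdryD_eq_zero {x : Finset (α × α) →₀ ZMod 2}
    (hsymm : ∀ m ∈ x.support, ∀ e ∈ m, ∀ f ∈ m, e ≠ f → DropsCycle A m e →
      DropsCycle A (m.erase e) f → DropsCycle A m f ∧ DropsCycle A (m.erase f) e) :
    bdryD A (bdryD A x) = 0 := by
  classical
  set L := Finsupp.linearCombination (ZMod 2)
    fun m => ∑ e ∈ m with DropsCycle A m e, Finsupp.single (m.erase e) (1 : ZMod 2)
  have hL : ∀ y, bdryD A (bdryD A y) = (L ∘ₗ L) y := by
    rw [bdryD_eq_linearCombination]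
    exact fun _ => rfl
  rw [hL, ← Finsupp.sum_single x, map_finsuppSum]
  refine Finset.sum_eq_zero fun m hm => ?_
  dsimp only
  rw [← Finsupp.smul_single_one m (x m), map_smul, ← hL, bdryD_bdryD_single A (hsymm m hm),
    smul_zero]

end Differential

namespace GraphArc

variable {V : Type*} [DecidableEq V] {G : SimpleGraph V} {σ τ : Finset V}

theorem card_left (h : GraphArc G σ τ) : σ.card = 2 := by
  obtain ⟨u, v, huv, rfl, _⟩ := h
  exact Finset.card_pair huv.ne

theorem card_right (h : GraphArc G σ τ) : τ.card = 1 := by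
  obtain ⟨u, v, -, -, rfl | rfl⟩ := h <;> rfl

theorem exists_mem_eq_singleton (h : GraphArc G σ τ) : ∃ w ∈ σ, τ = {w} := by
  obtain ⟨u, v, -, rfl, rfl | rfl⟩ := h
  exacts [⟨u, by simp, rfl⟩, ⟨v, by simp, rfl⟩]

/-- An edge-face has only two endpoints. -/
theorem eq_of_ne_of_ne {τ₁ τ₂ τ₃ : Finset V} (h₁ : GraphArc G σ τ₁) (h₂ : GraphArc G σ τ₂)
    (h₃ : GraphArc G σ τ₃) (h₁₃ : τ₁ ≠ τ₃) (h₂₃ : τ₂ ≠ τ₃) : τ₁ = τ₂ := by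
  obtain ⟨u₁, hu₁, rfl⟩ := h₁.exists_mem_eq_singleton
  obtain ⟨u₂, hu₂, rfl⟩ := h₂.exists_mem_eq_singleton
  obtain ⟨u₃, hu₃, rfl⟩ := h₃.exists_mem_eq_singleton
  by_contra h₁₂
  have : ({u₁, u₂, u₃} : Finset V).card = 3 := Finset.card_eq_three.2
    ⟨u₁, u₂, u₃, by grind, by grind, by grind, rfl⟩
  have := Finset.card_le_card (s := {u₁, u₂, u₃}) (t := σ) (by grind)
  grind [h₁.card_left]

end GraphArc

namespace IsMatching

section

variable {α : Type*} {A : α → α → Prop} {m : Finset (α × α)}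

theorem fst_injOn (hm : IsMatching A m) {p q : α × α} (hp : p ∈ m) (hq : q ∈ m)
    (h : p.1 = q.1) : p = q :=
  by_contra fun hpq => (hm.2 p hp q hq hpq).1 h

theorem snd_injOn (hm : IsMatching A m) {p q : α × α} (hp : p ∈ m) (hq : q ∈ m)
    (h : p.2 = q.2) : p = q :=
  by_contra fun hpq => (hm.2 p hp q hq hpq).2.2.2 h

theorem erase [DecidableEq α] (hm : IsMatching A m) (e : α × α) : IsMatching A (m.erase e) :=
  ⟨fun p hp => hm.1 p (Finset.mem_of_mem_erase hp),
    fun p hp q hq => hm.2 p (Finset.mem_of_mem_erase hp) q (Finset.mem_of_mem_erase hq)⟩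

end

variable {V : Type*} [DecidableEq V] {G : SimpleGraph V} {m : Finset (Finset V × Finset V)}
  {e f : Finset V × Finset V} {x y b c : Finset V}

theorem mStep_eq_of_card_eq_one (hm : IsMatching (GraphArc G) m) (hx : x.card = 1)
    (hb : MStep (GraphArc G) m x b) (hc : MStep (GraphArc G) m x c) : b = c := by
  have matched : ∀ {z}, MStep (GraphArc G) m x z → (z, x) ∈ m := by
    rintro z (⟨hxz, -⟩ | ⟨-, hzx⟩)
    · exact absurd hxz.card_left (by omega)
    · exact hzx
  exact congrArg Prod.fst (hm.snd_injOn (matched hb) (matched hc) rfl)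

theorem mStep_eq_of_mem (hm : IsMatching (GraphArc G) m) (hxy : (x, y) ∈ m)
    (hb : MStep (GraphArc G) m x b) (hc : MStep (GraphArc G) m x c) : b = c := by
  have hxy' : GraphArc G x y := hm.1 _ hxy
  have forward : ∀ {z}, MStep (GraphArc G) m x z → GraphArc G x z ∧ z ≠ y := by
    rintro z (⟨hxz, hnm⟩ | ⟨hzx, -⟩)
    · exact ⟨hxz, by rintro rfl; exact hnm hxy⟩
    · exact absurd hzx.card_right (by rw [hxy'.card_left]; omega)
  obtain ⟨hxb, hby⟩ := forward hb
  obtain ⟨hxc, hcy⟩ := forward hc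
  exact hxb.eq_of_ne_of_ne hxc hxy' hby hcy

/-- A face on an oriented cycle is entered either by a forward arc, so it is a vertex, or by a
reversed arc of `m`, so it is a matched edge; either way its successor is determined. -/
theorem mStep_eq_of_mem_cycle (hm : IsMatching (GraphArc G) m) {l : List (Finset V)}
    (hl : IsCycleList (MStep (GraphArc G) m) l) (hx : x ∈ l)
    (hb : MStep (GraphArc G) m x b) (hc : MStep (GraphArc G) m x c) : b = c := by
  obtain ⟨y, -, ⟨hyx, -⟩ | ⟨-, hxy⟩⟩ := hl.exists_rel_of_mem_s13 hx
  · exact hm.mStep_eq_of_card_eq_one hyx.card_right hb hc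
  · exact hm.mStep_eq_of_mem hxy hb hc

theorem isRotated_of_mem_cyclesOf (hm : IsMatching (GraphArc G) m) {l₁ l₂ : List (Finset V)}
    (h₁ : l₁ ∈ cyclesOf (GraphArc G) m) (h₂ : l₂ ∈ cyclesOf (GraphArc G) m)
    (hx₁ : x ∈ l₁) (hx₂ : x ∈ l₂) : l₁ ~r l₂ :=
  IsCycleList.isRotated_of_mem_s13 h₁ h₂ hx₁ hx₂ fun _ ha _ _ => hm.mStep_eq_of_mem_cycle h₁ ha

theorem fst_notMem_of_isCycleList_erase (hm : IsMatching (GraphArc G) m) (he : e ∈ m)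
    {l : List (Finset V)} (hl : IsCycleList (MStep (GraphArc G) (m.erase e)) l) : e.1 ∉ l := by
  intro hel
  obtain ⟨y, -, ⟨hye, -⟩ | ⟨-, hey⟩⟩ := hl.exists_rel_of_mem_s13 hel
  · exact absurd hye.card_right (by rw [(hm.1 e he).card_left]; omega)
  · exact Finset.ne_of_mem_erase hey (hm.fst_injOn (Finset.mem_of_mem_erase hey) he rfl)

theorem cyclesOf_erase (hm : IsMatching (GraphArc G) m) (he : e ∈ m) :
    cyclesOf (GraphArc G) (m.erase e) = {l ∈ cyclesOf (GraphArc G) m | e.1 ∉ l} := by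
  ext l
  constructor
  · intro hl
    have hel : e.1 ∉ l := hm.fst_notMem_of_isCycleList_erase he hl
    refine ⟨hl.mono fun a ha b _ hab => ?_, hel⟩
    rcases hab with ⟨hab, hnm⟩ | ⟨hba, hbm⟩
    · refine Or.inl ⟨hab, fun habm => hnm (Finset.mem_erase.2 ⟨?_, habm⟩)⟩
      rintro rfl
      exact hel ha
    · exact Or.inr ⟨hba, Finset.mem_of_mem_erase hbm⟩
  · rintro ⟨hl, hel⟩
    refine hl.mono fun a _ b hb hab => ?_
    rcases hab with ⟨hab, hnm⟩ | ⟨hba, hbm⟩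
    · exact Or.inl ⟨hab, fun habm => hnm (Finset.mem_of_mem_erase habm)⟩
    · refine Or.inr ⟨hba, Finset.mem_erase.2 ⟨?_, hbm⟩⟩
      rintro rfl
      exact hel hb

variable [Fintype V]

theorem dropsCycle_iff (hm : IsMatching (GraphArc G) m) (he : e ∈ m) :
    DropsCycle (GraphArc G) m e ↔ 2 ≤ m.card ∧ ∃ l ∈ cyclesOf (GraphArc G) m, e.1 ∈ l := by
  refine and_congr_right fun _ => ⟨fun hJ => ?_, fun ⟨l₀, hl₀, hel₀⟩ => ?_⟩
  · by_contra! hno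
    have : cyclesOf (GraphArc G) (m.erase e) = cyclesOf (GraphArc G) m := by
      rw [hm.cyclesOf_erase he]
      exact Set.sep_eq_self_iff_mem_true.2 hno
    rw [numCycles, numCycles, this] at hJ
    omega
  · unfold numCycles
    set cycle := Quotient.mk (List.IsRotated.setoid (Finset V))
    have hnotMem : cycle l₀ ∉ cycle '' cyclesOf (GraphArc G) (m.erase e) := by
      rintro ⟨l, hl, hll₀⟩
      rw [hm.cyclesOf_erase he] at hl
      exact hl.2 ((Quotient.exact hll₀).mem_iff.2 hel₀)
    have himage : cycle '' cyclesOf (GraphArc G) m =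
        insert (cycle l₀) (cycle '' cyclesOf (GraphArc G) (m.erase e)) := by
      rw [hm.cyclesOf_erase he]
      ext q
      constructor
      · rintro ⟨l, hl, rfl⟩
        by_cases hel : e.1 ∈ l
        · exact Or.inl (Quotient.sound (hm.isRotated_of_mem_cyclesOf hl hl₀ hel hel₀))
        · exact Or.inr ⟨l, ⟨hl, hel⟩, rfl⟩
      · rintro (rfl | ⟨l, ⟨hl, -⟩, rfl⟩)
        exacts [⟨l₀, hl₀, rfl⟩, ⟨l, hl, rfl⟩]
    rw [himage, Set.ncard_insert_of_notMem hnotMem (IsCycleList.setOf_finite.image _)]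

/-- If `e` lies on a cycle `c` of `m` and `f` on a cycle of `m \ {e}`, that cycle is a cycle of
`m` other than `c`, so `c` avoids `f` and survives in `m \ {f}`. -/
theorem dropsCycle_erase_symm (hm : IsMatching (GraphArc G) m) (he : e ∈ m) (hf : f ∈ m)
    (hef : e ≠ f) (h₁ : DropsCycle (GraphArc G) m e)
    (h₂ : DropsCycle (GraphArc G) (m.erase e) f) :
    DropsCycle (GraphArc G) m f ∧ DropsCycle (GraphArc G) (m.erase f) e := by
  have hfe : f ∈ m.erase e := Finset.mem_erase.2 ⟨hef.symm, hf⟩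
  obtain ⟨hm₂, le, hle, hele⟩ := (hm.dropsCycle_iff he).1 h₁
  obtain ⟨hm₃, lf, hlf, hflf⟩ := ((hm.erase e).dropsCycle_iff hfe).1 h₂
  rw [hm.cyclesOf_erase he] at hlf
  have hfle : f.1 ∉ le := fun hfle =>
    hlf.2 ((hm.isRotated_of_mem_cyclesOf hle hlf.1 hfle hflf).mem_iff.1 hele)
  refine ⟨(hm.dropsCycle_iff hf).2 ⟨hm₂, lf, hlf.1, hflf⟩,
    ((hm.erase f).dropsCycle_iff (Finset.mem_erase.2 ⟨hef, he⟩)).2 ⟨?_, le, ?_, hele⟩⟩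
  · rwa [Finset.card_erase_of_mem hf, ← Finset.card_erase_of_mem he]
  · rw [hm.cyclesOf_erase hf]
    exact ⟨hle, hfle⟩

end IsMatching

/-- for a finite simple graph `G`, `∂_d ∘ ∂_d = 0` on the 𝔽₂-vector
space `Ĉ(G)` with basis the nonempty matchings on the face poset `F(G)`; that is, the
diagonal map `∂_d` is a differential on `Ĉ(G)`. -/
theorem bdryD_squared_zero {V : Type*} [Fintype V] [DecidableEq V]
    (G : SimpleGraph V)
    (x : Finset (Finset V × Finset V) →₀ ZMod 2)
    (hx : ∀ m ∈ x.support, IsMatching (GraphArc G) m ∧ m ≠ ∅) :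
    bdryD (GraphArc G) (bdryD (GraphArc G) x) = 0 :=
  bdryD_bdryD_eq_zero _ fun m hm _ he _ hf hef => (hx m hm).1.dropsCycle_erase_symm he hf hef
end

section
/- Let n ≥ 3 and let L_n be the Laplacian matrix of the cycle graph C_n on n vertices. Then det(L_n − Id) equals 0 if n ≡ 0 (mod 6), equals −1 if n ≡ 1 or 5 (mod 6), equals −3 if n ≡ 2 or 4 (mod 6), and equals −4 if n ≡ 3 (mod 6). -/
/-!
Let `S` be the cyclic shift on `Fin n`. Then `L − 1 = 1 − S − Sᵀ` with `Sᵀ = S⁻¹`, so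
`−S (L − 1) = S² − S + 1 = (a − S)(b − S)`, where `a, b` are the roots of `X² − X + 1`.
The shift is diagonalised by the Vandermonde matrix of a primitive `n`-th root of unity, so
`det (z − S) = zⁿ − 1`; at `z = 0` this gives `det (−S) = −1`, hence `det (L − 1) = aⁿ + bⁿ − 2`.
Since `a³ = b³ = −1`, this only depends on `n mod 6`.
-/

open Matrix Polynomial

theorem permMatrix_mul_transpose_permMatrix {R ι : Type*} [NonAssocSemiring R] [DecidableEq ι]
    [Fintype ι] (σ : Equiv.Perm ι) : σ.permMatrix R * (σ.permMatrix R)ᵀ = 1 := by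
  rw [transpose_permMatrix, ← permMatrix_mul, inv_mul_cancel, permMatrix_one]

section CyclicShift

variable {R : Type*} [CommRing R] {n : ℕ} {ω : R}

theorem IsPrimitiveRoot.pow_val_finRotate (hω : IsPrimitiveRoot ω n) (i : Fin n) :
    ω ^ (finRotate n i : ℕ) = ω ^ (i : ℕ) * ω := by
  cases n with
  | zero => exact i.elim0
  | succ n =>
    rw [coe_finRotate]
    split_ifs with h
    · simp [h, ← pow_succ, hω.pow_eq_one]
    · exact pow_succ ω i

theorem permMatrix_finRotate_mul_vandermonde (hω : IsPrimitiveRoot ω n) :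
    (finRotate n).permMatrix R * vandermonde (fun i : Fin n => ω ^ (i : ℕ)) =
      vandermonde (fun i : Fin n => ω ^ (i : ℕ)) * diagonal (fun j : Fin n => ω ^ (j : ℕ)) := by
  ext i j
  rw [PEquiv.toMatrix_toPEquiv_mul, submatrix_apply, mul_diagonal, vandermonde_apply,
    vandermonde_apply, hω.pow_val_finRotate, mul_pow, id]

theorem IsPrimitiveRoot.prod_sub_pow_eq_pow_sub_one [IsDomain R] [NeZero n]
    (hω : IsPrimitiveRoot ω n) (z : R) : ∏ j : Fin n, (z - ω ^ (j : ℕ)) = z ^ n - 1 := by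
  have := congrArg (eval z) (X_pow_sub_C_eq_prod hω (Nat.pos_of_neZero n) (one_pow n))
  simpa [eval_prod, Fin.prod_univ_eq_prod_range (fun j => z - ω ^ j)] using this.symm

theorem det_smul_one_sub_permMatrix_finRotate [IsDomain R] [NeZero n]
    (hω : IsPrimitiveRoot ω n) (z : R) :
    det (z • 1 - (finRotate n).permMatrix R) = z ^ n - 1 := by
  set V := vandermonde (fun i : Fin n => ω ^ (i : ℕ))
  have hV : V.det ≠ 0 :=
    det_vandermonde_ne_zero_iff.2 fun i j h => Fin.ext (hω.pow_inj i.2 j.2 h)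
  have hdiag : (z • 1 - (finRotate n).permMatrix R) * V =
      V * diagonal (fun j : Fin n => z - ω ^ (j : ℕ)) := by
    rw [sub_mul, permMatrix_finRotate_mul_vandermonde hω, smul_one_mul, ← diagonal_sub, mul_sub]
    congr 1
    ext i j
    simp [mul_comm]
  apply mul_right_cancel₀ hV
  rw [← det_mul, hdiag, det_mul, det_diagonal, hω.prod_sub_pow_eq_pow_sub_one, mul_comm]

theorem det_one_sub_permMatrix_finRotate_sub_transpose [IsDomain R] [NeZero n]
    (hω : IsPrimitiveRoot ω n) {a b : R} (hsum : a + b = 1) (hprod : a * b = 1) :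
    det (1 - (finRotate n).permMatrix R - ((finRotate n).permMatrix R)ᵀ) = a ^ n + b ^ n - 2 := by
  set S := (finRotate n).permMatrix R
  have hfactor : -S * (1 - S - Sᵀ) = (a • 1 - S) * (b • 1 - S) := by
    have hSS : S * Sᵀ = 1 := permMatrix_mul_transpose_permMatrix _
    simp only [neg_mul, mul_sub, sub_mul, mul_one, one_mul, smul_mul_assoc, mul_smul_comm, hSS]
    linear_combination (norm := module) hsum • S - hprod • (1 : Matrix (Fin n) (Fin n) R)
  have hS : det (-S) = -1 := by
    simpa [zero_pow (NeZero.ne n)] using det_smul_one_sub_permMatrix_finRotate hω 0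
  have hab : a ^ n * b ^ n = 1 := by rw [← mul_pow, hprod, one_pow]
  have hdet := congrArg det hfactor
  rw [det_mul, det_mul, hS, det_smul_one_sub_permMatrix_finRotate hω,
    det_smul_one_sub_permMatrix_finRotate hω] at hdet
  linear_combination -hdet - hab

theorem pow_add_pow_sub_two_of_add_eq_one_of_mul_eq_one {a b : R} (hsum : a + b = 1)
    (hprod : a * b = 1) (n : ℕ) :
    a ^ n + b ^ n - 2 = ((if n % 6 = 0 then 0
      else if n % 6 = 1 ∨ n % 6 = 5 then -1
      else if n % 6 = 2 ∨ n % 6 = 4 then -3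
      else -4 : ℤ) : R) := by
  have ha : a ^ 3 = -1 := by linear_combination (a + 1) * a * hsum - (a + 1) * hprod
  have hb : b ^ 3 = -1 := by linear_combination (b + 1) * b * hsum - (b + 1) * hprod
  have h6 : ∀ c : R, c ^ 3 = -1 → c ^ 6 = 1 := fun c hc => by
    linear_combination (c ^ 3 - 1) * hc
  rw [pow_eq_pow_mod n (h6 a ha), pow_eq_pow_mod n (h6 b hb)]
  have hr := Nat.mod_lt n (show 6 > 0 by norm_num)
  interval_cases n % 6
  · norm_num
  · norm_num; linear_combination hsum
  · norm_num; linear_combination (a + b + 1) * hsum - 2 * hprod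
  · norm_num; linear_combination ha + hb
  · norm_num; linear_combination a * ha + b * hb - hsum
  · norm_num; linear_combination a ^ 2 * ha + b ^ 2 * hb - (a + b + 1) * hsum + 2 * hprod

end CyclicShift

theorem adjMatrix_cycleGraph (R : Type*) [NonAssocSemiring R] (n : ℕ) :
    (SimpleGraph.cycleGraph (n + 3)).adjMatrix R =
      (finRotate (n + 3)).permMatrix R + ((finRotate (n + 3)).permMatrix R)ᵀ := by
  ext i j
  simp only [SimpleGraph.adjMatrix_apply, Matrix.add_apply, transpose_apply,
    PEquiv.toMatrix_apply, Equiv.toPEquiv_apply, Option.mem_def, Option.some_inj, finRotate_apply,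
    SimpleGraph.cycleGraph_adj, sub_eq_iff_eq_add']
  have h2 : i + 1 + 1 ≠ i := by simp [add_assoc, Fin.ext_iff, Fin.val_add, Nat.mod_eq_of_lt]
  by_cases hij : i + 1 = j
  · subst hij
    simp [h2]
  · simp [hij, eq_comm, Ne.symm hij]

theorem lapMatrix_cycleGraph_sub_one (R : Type*) [NonAssocRing R] (n : ℕ) :
    (SimpleGraph.cycleGraph (n + 3)).lapMatrix R - 1 =
      1 - (finRotate (n + 3)).permMatrix R - ((finRotate (n + 3)).permMatrix R)ᵀ := by
  have hdeg : (SimpleGraph.cycleGraph (n + 3)).degMatrix R = 2 := by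
    simp [SimpleGraph.degMatrix, SimpleGraph.cycleGraph_degree_three_le, diagonal_ofNat]
  rw [SimpleGraph.lapMatrix, hdeg, adjMatrix_cycleGraph, ← one_add_one_eq_two]
  abel

/-- for `n ≥ 3`, the determinant of `L_n − Id`, where `L_n` is the
Laplacian matrix of the cycle graph `C_n`, is `0, −1, −3, −4` according to
`n mod 6` being `0`, `1 or 5`, `2 or 4`, `3` respectively. -/
theorem det_lapMatrix_cycleGraph_sub_one (n : ℕ) (hn : 3 ≤ n) :
    ((SimpleGraph.cycleGraph n).lapMatrix ℤ - 1).det =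
      if n % 6 = 0 then 0
      else if n % 6 = 1 ∨ n % 6 = 5 then -1
      else if n % 6 = 2 ∨ n % 6 = 4 then -3
      else -4 := by
  obtain ⟨m, rfl⟩ : ∃ m, n = m + 3 := ⟨n - 3, by omega⟩
  obtain ⟨s, hs⟩ := IsAlgClosed.exists_eq_mul_self (-3 : ℂ)
  have hsum : (1 + s) / 2 + (1 - s) / 2 = 1 := by ring
  have hprod : (1 + s) / 2 * ((1 - s) / 2) = 1 := by linear_combination hs / 4
  apply (Int.castRingHom ℂ).injective_int
  rw [RingHom.map_det, lapMatrix_cycleGraph_sub_one]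
  simp only [map_sub, map_one, RingHom.mapMatrix_apply, transpose_map, PEquiv.map_toMatrix]
  rw [det_one_sub_permMatrix_finRotate_sub_transpose (Complex.isPrimitiveRoot_exp _ (by omega))
    hsum hprod, pow_add_pow_sub_two_of_add_eq_one_of_mul_eq_one hsum hprod, eq_intCast]
end
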